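/- Let g be the 6-dimensional real Lie algebra with basis f₁,…,f₆ and nonzero differentials df¹ = f²∧f³, df² = f³∧f⁶, df³ = -f²∧f⁶, df⁴ = b f⁵∧f⁶, df⁵ = -b f⁴∧f⁶ (b ∈ ℝ), equivalently brackets [f₂,f₃] = -f₁, [f₆,f₂] = -f₃, [f₆,f₃] = f₂, [f₆,f₄] = -b f₅, [f₆,f₅] = b f₄. Define J by J f₁ = f₆, J f₂ = f₃, J f₄ = f₅ and let ω = f¹∧f⁶ + f²∧f³ + f⁴∧f⁵. Then J is integrable and dd^c ω = 0, i.e., (J, ω) is an SKT structure on g. -/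

import Mathlib

noncomputable section

/-- Bracket of the Lie algebra `(f²³, f³⁶, -f²⁶, b f⁵⁶, -b f⁴⁶, 0)`:
`[f₂,f₃] = -f₁`, `[f₆,f₂] = -f₃`, `[f₆,f₃] = f₂`, `[f₆,f₄] = -b f₅`, `[f₆,f₅] = b f₄`. -/
def br6 (b : ℝ) (x y : Fin 6 → ℝ) : Fin 6 → ℝ :=
  ![ -(x 1 * y 2 - x 2 * y 1),
     x 5 * y 2 - x 2 * y 5,
     -(x 5 * y 1 - x 1 * y 5),
     b * (x 5 * y 4 - x 4 * y 5),
     -(b * (x 5 * y 3 - x 3 * y 5)),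
     0 ]

/-- `J f₁ = f₆`, `J f₂ = f₃`, `J f₄ = f₅`. -/
def J6 (x : Fin 6 → ℝ) : Fin 6 → ℝ :=
  ![ -(x 5), -(x 2), x 1, -(x 4), x 3, x 0 ]

/-- `ω = f¹∧f⁶ + f²∧f³ + f⁴∧f⁵`. -/
def ω6 (x y : Fin 6 → ℝ) : ℝ :=
  (x 0 * y 5 - x 5 * y 0) + (x 1 * y 2 - x 2 * y 1) + (x 3 * y 4 - x 4 * y 3)

def dω6 (b : ℝ) (x y z : Fin 6 → ℝ) : ℝ :=
  -(ω6 (br6 b x y) z) - ω6 (br6 b z x) y - ω6 (br6 b y z) x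

/-- `d^c ω (X,Y,Z) = dω(JX,JY,JZ)`. -/
def dc6 (b : ℝ) (x y z : Fin 6 → ℝ) : ℝ :=
  dω6 b (J6 x) (J6 y) (J6 z)

def ddc6 (b : ℝ) (x y z w : Fin 6 → ℝ) : ℝ :=
  -(dc6 b (br6 b x y) z w) + dc6 b (br6 b x z) y w - dc6 b (br6 b x w) y z
    - dc6 b (br6 b y z) x w + dc6 b (br6 b y w) x z - dc6 b (br6 b z w) x y

/-- The 3-form `fⁱ⁺¹ ∧ fʲ⁺¹ ∧ fᵏ⁺¹` (indices are 0-based: `wedge₃ 1 2 5` is `f²³⁶`). -/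
def wedge₃ (i j k : Fin 6) (x y z : Fin 6 → ℝ) : ℝ :=
  !![x i, x j, x k; y i, y j, y k; z i, z j, z k].det

theorem J6_J6 (x : Fin 6 → ℝ) : J6 (J6 x) = -x := by
  funext i
  fin_cases i <;> simp [J6]

theorem nijenhuis_J6_eq_zero (b : ℝ) (x y : Fin 6 → ℝ) :
    br6 b (J6 x) (J6 y) - J6 (br6 b (J6 x) y) - J6 (br6 b x (J6 y)) - br6 b x y = 0 := by
  funext i
  fin_cases i <;> simp [br6, J6] <;> ring

theorem dω6_eq_wedge₃ (b : ℝ) (x y z : Fin 6 → ℝ) : dω6 b x y z = wedge₃ 1 2 5 x y z := by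
  simp only [dω6, ω6, br6, wedge₃, Matrix.det_fin_three, Matrix.of_apply, Matrix.cons_val_zero,
    Matrix.cons_val_one, Matrix.cons_val]
  ring

theorem dc6_eq_wedge₃ (b : ℝ) (x y z : Fin 6 → ℝ) : dc6 b x y z = wedge₃ 0 1 2 x y z := by
  simp only [dc6, dω6_eq_wedge₃, J6, wedge₃, Matrix.det_fin_three, Matrix.of_apply,
    Matrix.cons_val_zero, Matrix.cons_val_one, Matrix.cons_val]
  ring

/-- `d(f¹²³) = df¹ ∧ f²³ - f¹ ∧ df² ∧ f³ + f¹² ∧ df³ = f²³∧f²³ - f¹∧f³⁶∧f³ - f¹²∧f²⁶`,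
and each term repeats a factor. -/
theorem ddc6_eq_zero (b : ℝ) (x y z w : Fin 6 → ℝ) : ddc6 b x y z w = 0 := by
  simp only [ddc6, dc6_eq_wedge₃, wedge₃, Matrix.det_fin_three, Matrix.of_apply, br6,
    Matrix.cons_val_zero, Matrix.cons_val_one, Matrix.cons_val]
  ring

/-- `(J, ω)` is an SKT structure: `J² = -Id`, `J` is integrable
(vanishing Nijenhuis tensor) and `dd^c ω = 0`. -/
theorem stmt_6 (b : ℝ) :
    (∀ x : Fin 6 → ℝ, J6 (J6 x) = -x) ∧
    (∀ x y : Fin 6 → ℝ,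
      br6 b (J6 x) (J6 y) - J6 (br6 b (J6 x) y) - J6 (br6 b x (J6 y)) - br6 b x y = 0) ∧
    (∀ x y z w : Fin 6 → ℝ, ddc6 b x y z w = 0) :=
  ⟨J6_J6, nijenhuis_J6_eq_zero b, ddc6_eq_zero b⟩

end
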